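/- Let σ_v, σ_{v′}, σ_A, σ_B be n-qubit Pauli operators. If σ_{v′} is not proportional to σ_v σ_A σ_B (i.e., σ_{v′} ≠ c · σ_v σ_A σ_B for every c ∈ ℂ), then ⟨S(σ_v, σ_A), S(σ_{v′}, σ_B)⟩ = 0. -/
import Mathlib


/-- The four one-qubit Pauli matrices. -/
noncomputable def pauli1 : Fin 4 → Matrix (Fin 2) (Fin 2) ℂ
  | 0 => !![1, 0; 0, 1]
  | 1 => !![0, 1; 1, 0]
  | 2 => !![0, -Complex.I; Complex.I, 0]
  | 3 => !![1, 0; 0, -1]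

/-- The `n`-qubit Pauli operator `σ_r = σ_{r_1} ⊗ ⋯ ⊗ σ_{r_n}`. -/
noncomputable def pauli {n : ℕ} (r : Fin n → Fin 4) :
    Matrix (Fin n → Fin 2) (Fin n → Fin 2) ℂ :=
  fun x y => ∏ i, pauli1 (r i) (x i) (y i)


/-- The Choi vector `|A⟩⟩ = Σ_i e_i ⊗ A e_i`: its `(i, j)` component is `A j i`. -/
noncomputable def choiVec {D : Type*} (A : Matrix D D ℂ) : D × D → ℂ :=
  fun x => A x.2 x.1

/-- `S(U, V) := |0⟩⊗|0⟩⊗|VU⟩⟩ + |1⟩⊗|1⟩⊗|UV⟩⟩ ∈ ℂ² ⊗ ℂ² ⊗ ℂ^d ⊗ ℂ^d`. -/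
noncomputable def SVec {D : Type*} [Fintype D] [DecidableEq D] (U V : Matrix D D ℂ) :
    Fin 2 × Fin 2 × D × D → ℂ :=
  fun x => (if x.1 = 0 ∧ x.2.1 = 0 then choiVec (V * U) x.2.2 else 0) +
    (if x.1 = 1 ∧ x.2.1 = 1 then choiVec (U * V) x.2.2 else 0)

/-! ### Auxiliary lemmas -/

/-- Multiplication table of Pauli indices (Klein four-group). -/
def mul4 : Fin 4 → Fin 4 → Fin 4
  | 0, 0 => 0 | 0, 1 => 1 | 0, 2 => 2 | 0, 3 => 3
  | 1, 0 => 1 | 1, 1 => 0 | 1, 2 => 3 | 1, 3 => 2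
  | 2, 0 => 2 | 2, 1 => 3 | 2, 2 => 0 | 2, 3 => 1
  | 3, 0 => 3 | 3, 1 => 2 | 3, 2 => 1 | 3, 3 => 0

/-- Phases in the Pauli multiplication table. -/
noncomputable def ph : Fin 4 → Fin 4 → ℂ
  | 0, 0 => 1 | 0, 1 => 1 | 0, 2 => 1 | 0, 3 => 1
  | 1, 0 => 1 | 1, 1 => 1 | 1, 2 => Complex.I | 1, 3 => -Complex.I
  | 2, 0 => 1 | 2, 1 => -Complex.I | 2, 2 => 1 | 2, 3 => Complex.I
  | 3, 0 => 1 | 3, 1 => Complex.I | 3, 2 => -Complex.I | 3, 3 => 1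

lemma ph_ne_zero (a b : Fin 4) : ph a b ≠ 0 := by
  fin_cases a <;> fin_cases b <;> simp [ph, Complex.I_ne_zero]

lemma mul1 (a b : Fin 4) : pauli1 a * pauli1 b = ph a b • pauli1 (mul4 a b) := by
  fin_cases a <;> fin_cases b <;>
    ext i j <;> fin_cases i <;> fin_cases j <;>
      simp [pauli1, mul4, ph, Matrix.mul_apply, Fin.sum_univ_two]

lemma orth1 (a b : Fin 4) :
    ∑ x : Fin 2, ∑ y : Fin 2, (starRingEnd ℂ) (pauli1 a x y) * pauli1 b x y
      = if a = b then 2 else 0 := by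
  fin_cases a <;> fin_cases b <;>
    norm_num [pauli1, Fin.sum_univ_two, Complex.conj_I, Complex.ext_iff, Fin.ext_iff]

lemma mul1' (a b : Fin 4) (x y : Fin 2) :
    ∑ t : Fin 2, pauli1 a x t * pauli1 b t y = ph a b * pauli1 (mul4 a b) x y := by
  have := congrFun (congrFun (mul1 a b) x) y
  simpa [Matrix.mul_apply] using this

lemma sum_prod_swap {n : ℕ} (g : Fin n → Fin 2 → ℂ) :
    ∑ z : Fin n → Fin 2, ∏ i, g i (z i) = ∏ i, ∑ t, g i t := by
  rw [Finset.prod_univ_sum, Fintype.piFinset_univ]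

lemma pauli_mul {n : ℕ} (r s : Fin n → Fin 4) :
    pauli r * pauli s
      = (∏ i, ph (r i) (s i)) • pauli (fun i => mul4 (r i) (s i)) := by
  ext x y
  simp only [Matrix.mul_apply, Matrix.smul_apply, pauli, smul_eq_mul]
  calc ∑ z, (∏ i, pauli1 (r i) (x i) (z i)) * ∏ i, pauli1 (s i) (z i) (y i)
      = ∑ z : Fin n → Fin 2, ∏ i, (pauli1 (r i) (x i) (z i) * pauli1 (s i) (z i) (y i)) :=
        Finset.sum_congr rfl fun z _ => (Finset.prod_mul_distrib).symm
    _ = ∏ i, ∑ t : Fin 2, pauli1 (r i) (x i) t * pauli1 (s i) t (y i) :=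
        sum_prod_swap (fun i t => pauli1 (r i) (x i) t * pauli1 (s i) t (y i))
    _ = ∏ i, (ph (r i) (s i) * pauli1 (mul4 (r i) (s i)) (x i) (y i)) :=
        Finset.prod_congr rfl fun i _ => mul1' _ _ _ _
    _ = (∏ i, ph (r i) (s i)) * ∏ i, pauli1 (mul4 (r i) (s i)) (x i) (y i) :=
        Finset.prod_mul_distrib

lemma trace_zero {n : ℕ} (m m' : Fin n → Fin 4) (i0 : Fin n) (hi : m i0 ≠ m' i0) :
    ∑ p : (Fin n → Fin 2) × (Fin n → Fin 2),
      (starRingEnd ℂ) (pauli m p.2 p.1) * pauli m' p.2 p.1 = 0 := by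
  rw [Fintype.sum_prod_type]
  calc ∑ j : Fin n → Fin 2, ∑ i : Fin n → Fin 2,
            (starRingEnd ℂ) (pauli m i j) * pauli m' i j
      = ∑ j : Fin n → Fin 2, ∏ k,
          ∑ x : Fin 2, (starRingEnd ℂ) (pauli1 (m k) x (j k)) * pauli1 (m' k) x (j k) := by
        refine Finset.sum_congr rfl fun j _ => ?_
        calc ∑ i : Fin n → Fin 2, (starRingEnd ℂ) (pauli m i j) * pauli m' i j
            = ∑ i : Fin n → Fin 2, ∏ k,
                ((starRingEnd ℂ) (pauli1 (m k) (i k) (j k)) * pauli1 (m' k) (i k) (j k)) := by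
              refine Finset.sum_congr rfl fun i _ => ?_
              simp only [pauli, map_prod, Finset.prod_mul_distrib]
          _ = _ := sum_prod_swap
                (fun k a => (starRingEnd ℂ) (pauli1 (m k) a (j k)) * pauli1 (m' k) a (j k))
    _ = ∏ k, ∑ t : Fin 2,
          ∑ x : Fin 2, (starRingEnd ℂ) (pauli1 (m k) x t) * pauli1 (m' k) x t :=
        sum_prod_swap
          (fun k t => ∑ x : Fin 2, (starRingEnd ℂ) (pauli1 (m k) x t) * pauli1 (m' k) x t)
    _ = 0 := by
        apply Finset.prod_eq_zero (Finset.mem_univ i0)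
        rw [Finset.sum_comm, orth1]
        simp [hi]

lemma trace_zero' {n : ℕ} (m m' : Fin n → Fin 4) (i0 : Fin n) (hi : m i0 ≠ m' i0)
    (c1 c2 : ℂ) :
    ∑ x : Fin n → Fin 2, ∑ y : Fin n → Fin 2,
      (starRingEnd ℂ) ((c1 • pauli m) y x) * ((c2 • pauli m') y x) = 0 := by
  have h0 := trace_zero m m' i0 hi
  rw [Fintype.sum_prod_type] at h0
  calc ∑ x : Fin n → Fin 2, ∑ y : Fin n → Fin 2,
        (starRingEnd ℂ) ((c1 • pauli m) y x) * ((c2 • pauli m') y x)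
      = ∑ x : Fin n → Fin 2, ∑ y : Fin n → Fin 2,
        (starRingEnd ℂ) c1 * c2 * ((starRingEnd ℂ) (pauli m y x) * pauli m' y x) := by
        refine Finset.sum_congr rfl fun x _ => Finset.sum_congr rfl fun y _ => ?_
        simp only [Matrix.smul_apply, smul_eq_mul, map_mul]
        ring
    _ = (starRingEnd ℂ) c1 * c2 * ∑ x : Fin n → Fin 2, ∑ y : Fin n → Fin 2,
        (starRingEnd ℂ) (pauli m y x) * pauli m' y x := by
        simp_rw [← Finset.mul_sum]
    _ = 0 := by rw [h0, mul_zero]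

lemma mul4_key1 : ∀ a b c d : Fin 4, mul4 (mul4 a b) c ≠ d → mul4 b a ≠ mul4 c d := by decide

lemma mul4_key2 : ∀ a b c d : Fin 4, mul4 (mul4 a b) c ≠ d → mul4 a b ≠ mul4 d c := by decide

/-- if `σ_{v′}` is not proportional to `σ_v σ_A σ_B`,
then `⟨S(σ_v, σ_A), S(σ_{v′}, σ_B)⟩ = 0`. -/
theorem stmt_15 (n : ℕ) (v v' A B : Fin n → Fin 4)
    (h : ∀ c : ℂ, pauli v' ≠ c • (pauli v * pauli A * pauli B)) :
    ∑ x, (starRingEnd ℂ) (SVec (pauli v) (pauli A) x) * SVec (pauli v') (pauli B) x = 0 := by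
  have hm : ∃ i, mul4 (mul4 (v i) (A i)) (B i) ≠ v' i := by
    by_contra hc
    push_neg at hc
    have hv' : (fun i => mul4 (mul4 (v i) (A i)) (B i)) = v' := funext hc
    set c : ℂ := (∏ i, ph (v i) (A i)) * ∏ i, ph (mul4 (v i) (A i)) (B i) with hcdef
    have hp : pauli v * pauli A * pauli B = c • pauli v' := by
      rw [pauli_mul, Matrix.smul_mul, pauli_mul, smul_smul]
      rw [show (fun i => mul4 (mul4 (v i) (A i)) (B i)) = v' from hv']
    have hc0 : c ≠ 0 := by
      apply mul_ne_zero <;>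
        exact Finset.prod_ne_zero_iff.mpr fun i _ => ph_ne_zero _ _
    exact h c⁻¹ (by rw [hp, smul_smul, inv_mul_cancel₀ hc0, one_smul])
  obtain ⟨i0, hi0⟩ := hm
  simp only [Fintype.sum_prod_type, Fin.sum_univ_two, SVec, choiVec]
  simp
  rw [pauli_mul A v, pauli_mul B v', pauli_mul v A, pauli_mul v' B,
    trace_zero' _ _ i0 (mul4_key1 _ _ _ _ hi0),
    trace_zero' _ _ i0 (mul4_key2 _ _ _ _ hi0), add_zero]
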